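/- arXiv:2412.12819 — 3 statements merged into one kernel-verified Lean document; each statement's English description precedes it below -/
import Mathlib

section
/- Let d > 4 be an integer. There is a constant C depending only on d such that for every κ > 0 and every ρ ∈ ℝ, |1+ρ|^{4d/(d−4)} ≤ 1 + (4d/(d−4)) ρ + (d/(d−4)) ( 2(3d+4)/(d−4) + κ ) ρ² + (d/(d−4)) C (1 + κ^{−(d+12)/(d−4)}) |ρ|^{4d/(d−4)}. -/
noncomputable section

open MeasureTheory Metric Filter
open scoped RealInnerProductSpace Topology ENNReal

namespace S2Stab

variable (d : ℕ)

/-- Ambient Euclidean space ℝ^{d+1}. -/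
abbrev E := EuclideanSpace ℝ (Fin (d + 1))

/-- The unit sphere S^d ⊂ ℝ^{d+1}. -/
abbrev Sph := Metric.sphere (0 : E d) 1

/-- The surface measure dω on S^d (induced from Lebesgue measure via polar coordinates). -/
def sphMeas : Measure (Sph d) := (volume : Measure (E d)).toSphere

/-- |S^d|, the total surface measure of the sphere. -/
def sphVol : ℝ := (sphMeas d (Set.univ : Set (Sph d))).toReal

/-- Radial retraction of ℝ^{d+1} onto the sphere (junk value at the origin). -/
def pt (x : E d) : Sph d :=
  haveI := Classical.dec (x = 0)
  if hx : x = 0 then ⟨EuclideanSpace.single 0 1, by simp [mem_sphere_zero_iff_norm]⟩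
  else ⟨‖x‖⁻¹ • x, by
    have hn : ‖x‖ ≠ 0 := norm_ne_zero_iff.mpr hx
    simp [mem_sphere_zero_iff_norm, norm_smul, abs_of_nonneg, inv_mul_cancel₀ hn]⟩

/-- The 0-homogeneous extension of a function on the sphere. -/
def ext (f : Sph d → ℝ) (x : E d) : ℝ := f (pt d x)

/-- A function on S^d is C^∞ iff its 0-homogeneous extension is C^∞ away from the origin. -/
def SmoothSph (f : Sph d → ℝ) : Prop := ContDiffOn ℝ (⊤ : ℕ∞) (ext d f) {(0 : E d)}ᶜ

/-- The Riemannian gradient ∇f on the round sphere: for the 0-homogeneous extension,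
the ambient gradient restricted to the sphere is tangential and coincides with the
intrinsic gradient. -/
def sGrad (f : Sph d → ℝ) (ω : Sph d) : E d := gradient (ext d f) ↑ω

/-- The Euclidean Laplacian on ℝ^{d+1}. -/
def eLap (F : E d → ℝ) (x : E d) : ℝ :=
  ∑ i : Fin (d + 1), iteratedFDeriv ℝ 2 F x ![EuclideanSpace.single i 1, EuclideanSpace.single i 1]

/-- The Laplace–Beltrami operator Δ on the round sphere: the restriction of the
ambient Laplacian of the 0-homogeneous extension. -/
def sLap (f : Sph d → ℝ) (ω : Sph d) : ℝ := eLap d (ext d f) ↑ω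

/-- σ₁(u) = −((d−4)/8) Δ(u²) − |∇u|² + (d/2)((d−4)/4)² u². -/
def sigma1 (f : Sph d → ℝ) (ω : Sph d) : ℝ :=
  -(((d : ℝ) - 4) / 8) * sLap d (fun ω' => f ω' ^ 2) ω - ‖sGrad d f ω‖ ^ 2
    + ((d : ℝ) / 2) * (((d : ℝ) - 4) / 4) ^ 2 * f ω ^ 2

/-- The energy density e₂(u). -/
def e2 (f : Sph d → ℝ) (ω : Sph d) : ℝ :=
  (4 / ((d : ℝ) - 4)) ^ 3 *
      (sigma1 d f ω + (1 / 2) * ‖sGrad d f ω‖ ^ 2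
        + (((d : ℝ) - 2) / 2) * (((d : ℝ) - 4) / 4) ^ 2 * f ω ^ 2) * ‖sGrad d f ω‖ ^ 2
    + ((d : ℝ) * ((d : ℝ) - 1) / 8) * f ω ^ 4

/-- E₂[u] = ∫ e₂(u) dω. -/
def E2 (f : Sph d → ℝ) : ℝ := ∫ ω, e2 d f ω ∂sphMeas d

/-- The critical exponent 4d/(d−4). -/
def critExp : ℝ := 4 * (d : ℝ) / ((d : ℝ) - 4)

/-- F₂[u] = E₂[u] / (∫ u^{4d/(d−4)})^{(d−4)/d}. -/
def F2 (f : Sph d → ℝ) : ℝ :=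
  E2 d f / (∫ ω, f ω ^ critExp d ∂sphMeas d) ^ (((d : ℝ) - 4) / (d : ℝ))

/-- The sharp constant S_d^{(2)} = (d(d−1)/8)|S^d|^{4/d}. -/
def Sd2 : ℝ := ((d : ℝ) * ((d : ℝ) - 1) / 8) * sphVol d ^ ((4 : ℝ) / (d : ℝ))

/-- L^p-norm on the sphere. -/
def Lnorm (p : ℝ) (f : Sph d → ℝ) : ℝ := (∫ ω, |f ω| ^ p ∂sphMeas d) ^ (1 / p)

/-- The W^{1,p}(S^d)-norm, ‖u‖ = (‖∇u‖_p^p + ‖u‖_p^p)^{1/p}. -/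
def W1norm (p : ℝ) (f : Sph d → ℝ) : ℝ :=
  ((∫ ω, ‖sGrad d f ω‖ ^ p ∂sphMeas d) + ∫ ω, |f ω| ^ p ∂sphMeas d) ^ (1 / p)

/-- Membership in the Sobolev space W^{1,p}(S^d). -/
def MemW1p (p : ℝ) (f : Sph d → ℝ) : Prop :=
  MemLp f (ENNReal.ofReal p) (sphMeas d) ∧
    (∀ᵐ (ω : Sph d) ∂sphMeas d, DifferentiableAt ℝ (ext d f) (ω : E d)) ∧
    MemLp (fun ω => ‖sGrad d f ω‖) (ENNReal.ofReal p) (sphMeas d)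

/-- The ambient formula for the special conformal map Ψ_ξ of the sphere, ξ ∈ B₁(0). -/
def psiRaw (ξ x : E d) : E d :=
  (1 - 2 * ⟪ξ, x⟫ + ‖ξ‖ ^ 2)⁻¹ • ((1 - ‖ξ‖ ^ 2) • x - (2 * (1 - ⟪ξ, x⟫)) • ξ)

/-- Möbius transformations of S^d: by Liouville's theorem, every conformal
diffeomorphism of the round sphere S^d (d ≥ 3) is of the form R ∘ Ψ_ξ with
R ∈ O(d+1) and ξ in the open unit ball of ℝ^{d+1}. -/
structure Mobius where
  R : E d ≃ₗᵢ[ℝ] E d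
  ξ : E d
  hξ : ‖ξ‖ < 1

instance : Nonempty (Mobius d) := ⟨⟨LinearIsometryEquiv.refl ℝ (E d), 0, by simp⟩⟩

/-- The action Ψ : S^d → S^d of a Möbius transformation. -/
def Mobius.app (Φ : Mobius d) (ω : Sph d) : Sph d := pt d (Φ.R (psiRaw d Φ.ξ ↑ω))

/-- The Jacobian determinant J_Ψ of a Möbius transformation,
J_{Ψ_ξ}(ω)^{1/d} = (1−|ξ|²)/(1−2ξ·ω+|ξ|²) (a rotation has Jacobian 1). -/
def Mobius.jac (Φ : Mobius d) (ω : Sph d) : ℝ :=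
  ((1 - ‖Φ.ξ‖ ^ 2) / (1 - 2 * ⟪Φ.ξ, (ω : E d)⟫ + ‖Φ.ξ‖ ^ 2)) ^ d

/-- The conformal transform (u)_Ψ := J_Ψ^{(d−4)/(4d)} · (u ∘ Ψ). -/
def confPush (Φ : Mobius d) (u : Sph d → ℝ) (ω : Sph d) : ℝ :=
  Mobius.jac d Φ ω ^ (((d : ℝ) - 4) / (4 * (d : ℝ))) * u (Mobius.app d Φ ω)

/-- Ψ_ξ as a Möbius transformation. -/
def mobOf (ξ : E d) (hξ : ‖ξ‖ < 1) : Mobius d := ⟨LinearIsometryEquiv.refl ℝ (E d), ξ, hξ⟩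

/-- The quadratic functional I₂. -/
def I2fun (r : Sph d → ℝ) : ℝ :=
  (4 * ((d : ℝ) - 1) / ((d : ℝ) - 4)) *
    ∫ ω, (‖sGrad d r ω‖ ^ 2 - (d : ℝ) * r ω ^ 2) ∂sphMeas d

/-- The cubic functional I₃. -/
def I3fun (r : Sph d → ℝ) : ℝ :=
  ∫ ω, ((4 * ((d : ℝ) - 2) / ((d : ℝ) - 4)) * r ω * ‖sGrad d r ω‖ ^ 2
    + ((d : ℝ) * ((d : ℝ) - 1) / 2) * r ω ^ 3) ∂sphMeas d

/-- The quartic functional I₄. -/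
def I4fun (r : Sph d → ℝ) : ℝ :=
  ∫ ω, ((1 / 2) * (4 / ((d : ℝ) - 4)) ^ 3 * ‖sGrad d r ω‖ ^ 4
    + (2 * ((d : ℝ) - 2) / ((d : ℝ) - 4)) * r ω ^ 2 * ‖sGrad d r ω‖ ^ 2
    + ((d : ℝ) * ((d : ℝ) - 1) / 8) * r ω ^ 4) ∂sphMeas d

/-- `f : S^d → ℝ` is a spherical harmonic of degree ℓ, i.e. the restriction to the sphere
of a harmonic polynomial on ℝ^{d+1} that is homogeneous of degree ℓ. -/
def IsSphHarm (ℓ : ℕ) (f : Sph d → ℝ) : Prop :=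
  ∃ P : MvPolynomial (Fin (d + 1)) ℝ, P.IsHomogeneous ℓ ∧
    (∀ x : E d, eLap d (fun y => MvPolynomial.eval (fun i => y i) P) x = 0) ∧
    ∀ ω : Sph d, f ω = MvPolynomial.eval (fun i => (ω : E d) i) P

/-- 0-homogeneous extension of an ℝ^{d+1}-valued map on the sphere. -/
def extV (V : Sph d → E d) (x : E d) : E d := V (pt d x)

/-- A vector field on the sphere is tangent if it is pointwise orthogonal to the position. -/
def IsTangent (V : Sph d → E d) : Prop := ∀ ω : Sph d, ⟪(ω : E d), V ω⟫ = 0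

/-- A vector field on the sphere is smooth iff its 0-homogeneous extension is smooth away
from the origin. -/
def SmoothVF (V : Sph d → E d) : Prop := ContDiffOn ℝ (⊤ : ℕ∞) (extV d V) {(0 : E d)}ᶜ

/-- Orthogonal projection onto the tangent space of the sphere at ω. -/
def projCLM (ω : Sph d) : E d →L[ℝ] E d :=
  ContinuousLinearMap.id ℝ (E d) - (innerSL ℝ (ω : E d)).smulRight (ω : E d)

/-- The Levi-Civita covariant derivative ∇Y of a tangent vector field on the round sphere at ω,
as a linear map: the tangential projection of the ambient derivative of the 0-homogeneous
extension of Y. -/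
def covDeriv (Y : Sph d → E d) (ω : Sph d) : E d →L[ℝ] E d :=
  (projCLM d ω).comp ((fderiv ℝ (extV d Y) ↑ω).comp (projCLM d ω))

/-- The Yamabe functional F₁[w]. -/
def F1 (w : Sph d → ℝ) : ℝ :=
  (2 / ((d : ℝ) - 2)) *
      (∫ ω, (‖sGrad d w ω‖ ^ 2 + ((d : ℝ) * ((d : ℝ) - 2) / 4) * w ω ^ 2) ∂sphMeas d)
    / (∫ ω, w ω ^ (2 * (d : ℝ) / ((d : ℝ) - 2)) ∂sphMeas d) ^ (((d : ℝ) - 2) / (d : ℝ))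

/-- The sharp Yamabe constant S_d^{(1)} = (d/2)|S^d|^{2/d}. -/
def Sd1 : ℝ := ((d : ℝ) / 2) * sphVol d ^ ((2 : ℝ) / (d : ℝ))


private lemma memuIcc_abs {u v : ℝ} (h : v ∈ Set.uIcc (0:ℝ) u) : |v| ≤ |u| := by
  rcases Set.mem_uIcc.1 h with ⟨h1, h2⟩ | ⟨h1, h2⟩ <;> rw [abs_le] <;>
    exact ⟨by cases abs_cases u with
      | inl h => nlinarith [h.1]
      | inr h => nlinarith [h.1], by cases abs_cases u with
      | inl h => nlinarith [h.1]
      | inr h => nlinarith [h.1]⟩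

private lemma chord {q v : ℝ} (hq : 1 ≤ q) (hv0 : 0 ≤ v) (hv : v ≤ 1/2) :
    (1+v)^q ≤ 1 + (2*((3/2:ℝ)^q - 1))*v := by
  have h := (convexOn_rpow hq).2 (by norm_num : (1:ℝ) ∈ Set.Ici (0:ℝ))
    (by norm_num : (3/2:ℝ) ∈ Set.Ici (0:ℝ)) (by linarith : (0:ℝ) ≤ 1 - 2*v)
    (by linarith : (0:ℝ) ≤ 2*v) (by ring)
  simp only [smul_eq_mul] at h
  have e : (1 - 2*v)*1 + 2*v*(3/2 : ℝ) = 1 + v := by ring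
  rw [e, Real.one_rpow] at h
  linarith

private lemma rpow_lin_bound {q v : ℝ} (hq : 1 ≤ q) (hv : |v| ≤ 1/2) :
    |(1+v)^q - 1| ≤ (max q (2*((3/2:ℝ)^q - 1))) * |v| := by
  set K := max q (2*((3/2:ℝ)^q - 1)) with hKdef
  have hKq : q ≤ K := le_max_left _ _
  have hK2 : 2*((3/2:ℝ)^q - 1) ≤ K := le_max_right _ _
  have hK0 : 0 < K := lt_of_lt_of_le (by linarith) hKq
  have hv1 : -(1/2 : ℝ) ≤ v := by cases abs_cases v with
    | inl h => linarith [h.1.symm.le, h.2]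
    | inr h => linarith [h.1]
  have hv2 : v ≤ 1/2 := (le_abs_self v).trans hv
  rw [abs_le]
  rcases le_or_gt 0 v with h0 | h0
  · have habs : |v| = v := abs_of_nonneg h0
    constructor
    · have h1 : (1:ℝ) ≤ (1+v)^q := by
        calc (1:ℝ) = 1 ^ q := (Real.one_rpow q).symm
        _ ≤ (1+v)^q := Real.rpow_le_rpow (by norm_num) (by linarith) (by linarith)
      nlinarith [mul_nonneg hK0.le (abs_nonneg v)]
    · have := chord hq h0 hv2
      rw [habs]; nlinarith
  · have habs : |v| = -v := abs_of_neg h0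
    constructor
    · have hb := one_add_mul_self_le_rpow_one_add (by linarith : (-1:ℝ) ≤ v) hq
      rw [habs]; nlinarith
    · have h1 : (1+v)^q ≤ 1 := Real.rpow_le_one (by linarith) (by linarith) (by linarith)
      nlinarith [mul_nonneg hK0.le (abs_nonneg v)]

private lemma taylor_cubic {p t : ℝ} (hp : 4 < p) (ht : |t| ≤ 1/2) :
    (1+t)^p ≤ 1 + p*t + (p*(p-1)/2)*t^2
      + (p*(p-1)*(max (p-2) (2*((3/2:ℝ)^(p-2) - 1))))*(|t| *t^2) := by
  set K := max (p-2) (2*((3/2:ℝ)^(p-2) - 1)) with hKdef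
  have hK0 : 0 < K := lt_of_lt_of_le (by linarith) (le_max_left _ _)
  have hq2 : (1:ℝ) ≤ p - 2 := by linarith
  -- pointwise positivity helper
  have hpos : ∀ {w v : ℝ}, |w| ≤ 1/2 → v ∈ Set.uIcc (0:ℝ) w → (0:ℝ) < 1 + v := by
    intro w v hw hv
    have h1 := memuIcc_abs hv
    have := neg_abs_le v
    linarith
  -- Step 1: |(1+u)^(p-1) - 1 - (p-1)*u| ≤ (p-1)*K*(|u| * |u|) for |u| ≤ 1/2
  have step1 : ∀ u : ℝ, |u| ≤ 1/2 →
      |(1+u)^(p-1) - 1 - (p-1)*u| ≤ (p-1)*K*(|u| * |u|) := by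
    intro u hu
    have hderiv : ∀ v ∈ Set.uIcc (0:ℝ) u,
        HasDerivAt (fun v : ℝ => (1+v)^(p-1) - (1 + (p-1)*v))
          ((p-1)*((1+v)^(p-2) - 1)) v := by
      intro v hv
      have hvpos := hpos hu hv
      have h1 : HasDerivAt (fun v : ℝ => 1+v) 1 v := by
        simpa using (hasDerivAt_id v).const_add 1
      have h2 := h1.rpow_const (p := p-1) (Or.inl (ne_of_gt hvpos))
      have h3 : HasDerivAt (fun v : ℝ => 1 + (p-1)*v) (p-1) v := by
        simpa using ((hasDerivAt_id v).const_mul (p-1)).const_add 1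
      have := h2.sub h3
      exact this.congr_deriv (by ring_nf)
    have hcont : ContinuousOn (fun v : ℝ => (p-1)*((1+v)^(p-2) - 1)) (Set.uIcc 0 u) := by
      apply ContinuousOn.mul continuousOn_const
      apply ContinuousOn.sub _ continuousOn_const
      intro v hv
      have hvpos := hpos hu hv
      exact ((continuous_const.add continuous_id).continuousAt.rpow_const
        (Or.inl (ne_of_gt hvpos))).continuousWithinAt
    have hint : IntervalIntegrable (fun v : ℝ => (p-1)*((1+v)^(p-2) - 1)) MeasureTheory.volume 0 u :=
      hcont.intervalIntegrable
    have hftc := intervalIntegral.integral_eq_sub_of_hasDerivAt hderiv hint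
    have heval : (fun v : ℝ => (1+v)^(p-1) - (1 + (p-1)*v)) u
        - (fun v : ℝ => (1+v)^(p-1) - (1 + (p-1)*v)) 0 = (1+u)^(p-1) - 1 - (p-1)*u := by
      simp [Real.one_rpow]
      ring
    have hbound : ∀ v ∈ Set.uIoc (0:ℝ) u, ‖(p-1)*((1+v)^(p-2) - 1)‖ ≤ (p-1)*K* |u| := by
      intro v hv
      have hv' : v ∈ Set.uIcc (0:ℝ) u := Set.uIoc_subset_uIcc hv
      have h1 : |v| ≤ |u| := memuIcc_abs hv'
      have h2 : |v| ≤ 1/2 := h1.trans hu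
      have h3 := rpow_lin_bound hq2 h2
      rw [Real.norm_eq_abs, abs_mul, abs_of_nonneg (by linarith : (0:ℝ) ≤ p - 1)]
      calc (p-1) * |(1+v)^(p-2) - 1| ≤ (p-1) * (K * |v|) := by
            apply mul_le_mul_of_nonneg_left _ (by linarith : (0:ℝ) ≤ p-1)
            exact h3
        _ = (p-1)*K* |v| := by ring
        _ ≤ (p-1)*K* |u| := mul_le_mul_of_nonneg_left h1 (by nlinarith)
    have := intervalIntegral.norm_integral_le_of_norm_le_const hbound
    rw [hftc, heval] at this
    rw [Real.norm_eq_abs] at this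
    calc |(1+u)^(p-1) - 1 - (p-1)*u| ≤ (p-1)*K* |u| * |u - 0| := this
      _ = (p-1)*K*(|u| * |u|) := by rw [sub_zero]; ring
  -- Step 2
  have hderiv2 : ∀ u ∈ Set.uIcc (0:ℝ) t,
      HasDerivAt (fun u : ℝ => (1+u)^p - (1 + p*u + (p*(p-1)/2)*u^2))
        (p*((1+u)^(p-1) - 1 - (p-1)*u)) u := by
    intro u hu
    have hupos := hpos ht hu
    have h1 : HasDerivAt (fun u : ℝ => 1+u) 1 u := by
      simpa using (hasDerivAt_id u).const_add 1
    have h2 := h1.rpow_const (p := p) (Or.inl (ne_of_gt hupos))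
    have h3 : HasDerivAt (fun u : ℝ => 1 + p*u + (p*(p-1)/2)*u^2)
        (p + (p*(p-1))*u) u := by
      have ha : HasDerivAt (fun u : ℝ => 1 + p*u) p u := by
        simpa using ((hasDerivAt_id u).const_mul p).const_add 1
      have hb : HasDerivAt (fun u : ℝ => (p*(p-1)/2)*u^2) ((p*(p-1)/2)*(2*u)) u := by
        simpa using ((hasDerivAt_pow 2 u)).const_mul (p*(p-1)/2)
      exact (ha.add hb).congr_deriv (by ring)
    have := h2.sub h3
    exact this.congr_deriv (by ring_nf)
  have hcont2 : ContinuousOn (fun u : ℝ => p*((1+u)^(p-1) - 1 - (p-1)*u)) (Set.uIcc 0 t) := by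
    apply ContinuousOn.mul continuousOn_const
    apply ContinuousOn.sub
    apply ContinuousOn.sub _ continuousOn_const
    · intro u hu
      have hupos := hpos ht hu
      exact ((continuous_const.add continuous_id).continuousAt.rpow_const
        (Or.inl (ne_of_gt hupos))).continuousWithinAt
    · exact (continuous_const.mul continuous_id).continuousOn
  have hint2 : IntervalIntegrable (fun u : ℝ => p*((1+u)^(p-1) - 1 - (p-1)*u))
      MeasureTheory.volume 0 t := hcont2.intervalIntegrable
  have hftc2 := intervalIntegral.integral_eq_sub_of_hasDerivAt hderiv2 hint2
  have heval2 : (fun u : ℝ => (1+u)^p - (1 + p*u + (p*(p-1)/2)*u^2)) t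
      - (fun u : ℝ => (1+u)^p - (1 + p*u + (p*(p-1)/2)*u^2)) 0
      = (1+t)^p - (1 + p*t + (p*(p-1)/2)*t^2) := by
    first
    | (simp [Real.one_rpow]; ring)
    | simp [Real.one_rpow]
  have hbound2 : ∀ u ∈ Set.uIoc (0:ℝ) t,
      ‖p*((1+u)^(p-1) - 1 - (p-1)*u)‖ ≤ p*((p-1)*K*(|t| * |t|)) := by
    intro u hu
    have hu' : u ∈ Set.uIcc (0:ℝ) t := Set.uIoc_subset_uIcc hu
    have h1 : |u| ≤ |t| := memuIcc_abs hu'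
    have h2 : |u| ≤ 1/2 := h1.trans ht
    have h3 := step1 u h2
    rw [Real.norm_eq_abs, abs_mul, abs_of_nonneg (by linarith : (0:ℝ) ≤ p)]
    have h4 : |(1+u)^(p-1) - 1 - (p-1)*u| ≤ (p-1)*K*(|t| * |t|) := by
      apply h3.trans
      apply mul_le_mul_of_nonneg_left _ (by nlinarith : (0:ℝ) ≤ (p-1)*K)
      nlinarith [abs_nonneg u, abs_nonneg t]
    exact mul_le_mul_of_nonneg_left h4 (by linarith)
  have hnorm := intervalIntegral.norm_integral_le_of_norm_le_const hbound2
  rw [hftc2, heval2, Real.norm_eq_abs] at hnorm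
  have hfin : |(1+t)^p - (1 + p*t + (p*(p-1)/2)*t^2)| ≤ p*(p-1)*K*(|t| *t^2) := by
    calc |(1+t)^p - (1 + p*t + (p*(p-1)/2)*t^2)| ≤ p*((p-1)*K*(|t| * |t|)) * |t - 0| := hnorm
      _ = p*(p-1)*K*(|t| *t^2) := by rw [sub_zero, ← sq_abs]; ring
  have := (abs_le.1 hfin).2
  linarith



set_option maxHeartbeats 2000000 in
/-- **Elementary inequality with explicit κ-dependence.** There is C = C(d) such that for all
κ > 0 and ρ ∈ ℝ, |1+ρ|^{4d/(d−4)} ≤ 1 + (4d/(d−4))ρ + (d/(d−4))(2(3d+4)/(d−4) + κ)ρ²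
+ (d/(d−4)) C (1 + κ^{−(d+12)/(d−4)}) |ρ|^{4d/(d−4)}. -/
theorem elementary_kappa_inequality (d : ℕ) (hd : 4 < d) :
    ∃ C : ℝ, 0 < C ∧ ∀ κ : ℝ, 0 < κ → ∀ ρ : ℝ,
      |1 + ρ| ^ critExp d ≤
        1 + (4 * (d : ℝ) / ((d : ℝ) - 4)) * ρ
          + ((d : ℝ) / ((d : ℝ) - 4)) * (2 * (3 * (d : ℝ) + 4) / ((d : ℝ) - 4) + κ) * ρ ^ 2
          + ((d : ℝ) / ((d : ℝ) - 4)) * C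
              * (1 + κ ^ (-(((d : ℝ) + 12) / ((d : ℝ) - 4)))) * |ρ| ^ critExp d := by
  have hd4 : (4:ℝ) < (d:ℝ) := by exact_mod_cast hd
  have hdd : (0:ℝ) < (d:ℝ) - 4 := by linarith
  set p : ℝ := critExp d with hpdef
  have hp : p = 4 * (d:ℝ) / ((d:ℝ) - 4) := rfl
  have hp4 : 4 < p := by
    rw [hp, lt_div_iff₀ hdd]; nlinarith
  have hp0 : (0:ℝ) < p := by linarith
  set K : ℝ := max (p-2) (2*((3/2:ℝ)^(p-2) - 1)) with hKdef
  have hK0 : 0 < K := lt_of_lt_of_le (by linarith) (le_max_left _ _)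
  set M : ℝ := p*(p-1)*K with hMdef
  have hM0 : 0 < M := by
    rw [hMdef]; exact mul_pos (mul_pos hp0 (by linarith)) hK0
  set C : ℝ := (4/p)*((3:ℝ)^p + p*(2:ℝ)^(p-1)) + (4/p)*M*((p/(4*M))^((3:ℝ)-p)) with hCdef
  have h3p : (0:ℝ) < (3:ℝ)^p := Real.rpow_pos_of_pos (by norm_num) p
  have h2p : (0:ℝ) < (2:ℝ)^(p-1) := Real.rpow_pos_of_pos (by norm_num) _
  have hpm0 : (0:ℝ) < p/(4*M) := div_pos hp0 (by linarith)
  have hpM : (0:ℝ) < (p/(4*M))^((3:ℝ)-p) := Real.rpow_pos_of_pos hpm0 _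
  have hC0 : 0 < C := by
    rw [hCdef]
    have t1 : (0:ℝ) < 4/p := div_pos (by norm_num) hp0
    have t2 : (0:ℝ) < (3:ℝ)^p + p*(2:ℝ)^(p-1) := by nlinarith [mul_pos hp0 h2p]
    nlinarith [mul_pos t1 t2, mul_pos (mul_pos t1 hM0) hpM]
  have hPC : p/4*C = ((3:ℝ)^p + p*(2:ℝ)^(p-1)) + M*((p/(4*M))^((3:ℝ)-p)) := by
    rw [hCdef]; field_simp
  clear_value p K M C
  refine ⟨C, hC0, ?_⟩
  intro κ hκ ρ
  have hexp : -(((d:ℝ) + 12) / ((d:ℝ) - 4)) = 3 - p := by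
    rw [hp]; field_simp; ring
  have h1 : 4 * (d:ℝ) / ((d:ℝ) - 4) = p := hp.symm
  have h2 : (d:ℝ) / ((d:ℝ) - 4) = p/4 := by rw [hp]; ring
  rw [h1, h2, hexp]
  have hquad : p / 4 * (2 * (3 * (d:ℝ) + 4) / ((d:ℝ) - 4) + κ) = p*(p-1)/2 + p/4*κ := by
    rw [hp]; field_simp; ring
  rw [hquad]
  have hs0 : (0:ℝ) < κ^((3:ℝ)-p) := Real.rpow_pos_of_pos hκ _
  have hX0 : (0:ℝ) ≤ |ρ|^p := Real.rpow_nonneg (abs_nonneg ρ) p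
  rcases le_or_gt (|ρ|) (1/2) with hr | hr
  · -- small ρ
    have habs : |1+ρ| = 1+ρ := abs_of_nonneg (by linarith [neg_abs_le ρ])
    rw [habs]
    have htay := taylor_cubic hp4 hr
    rw [← hKdef, ← hMdef] at htay
    have hkey : M*(|ρ| * ρ^2) ≤ p/4*κ*ρ^2 + p/4*C*(1+κ^((3:ℝ)-p))* |ρ|^p := by
      have hpc : (0:ℝ) < p/4*C := mul_pos (div_pos hp0 (by norm_num)) hC0
      have hRpos : (0:ℝ) ≤ p/4*C*(1+κ^((3:ℝ)-p))* |ρ|^p :=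
        mul_nonneg (mul_nonneg hpc.le (by linarith)) hX0
      rcases le_or_gt (|ρ|) (p*κ/(4*M)) with hsmall | hbig
      · have ha : M*(|ρ| * ρ^2) ≤ M*((p*κ/(4*M)) * ρ^2) :=
          mul_le_mul_of_nonneg_left
            (mul_le_mul_of_nonneg_right hsmall (sq_nonneg ρ)) hM0.le
        have hb : M*((p*κ/(4*M)) * ρ^2) = p/4*κ*ρ^2 := by
          have hMne : M ≠ 0 := hM0.ne'
          field_simp
        linarith
      · have hth : (0:ℝ) < p*κ/(4*M) := div_pos (mul_pos hp0 hκ) (by linarith)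
        have hρ0 : 0 < |ρ| := lt_trans hth hbig
        have e1 : |ρ| * ρ^2 = |ρ|^((3:ℝ)) := by
          rw [show (3:ℝ) = ((3:ℕ):ℝ) by norm_num, Real.rpow_natCast, ← sq_abs]; ring
        have e2 : |ρ|^((3:ℝ)) = |ρ|^((3:ℝ)-p) * |ρ|^p := by
          rw [← Real.rpow_add hρ0]; norm_num
        have e3 : |ρ|^((3:ℝ)-p) ≤ (p*κ/(4*M))^((3:ℝ)-p) :=
          Real.rpow_le_rpow_of_nonpos hth hbig.le (by linarith)
        have e4 : (p*κ/(4*M))^((3:ℝ)-p) = (p/(4*M))^((3:ℝ)-p) * κ^((3:ℝ)-p) := by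
          rw [show p*κ/(4*M) = (p/(4*M))*κ by ring, Real.mul_rpow hpm0.le hκ.le]
        have e5 : M*(|ρ| * ρ^2) ≤ M*((p/(4*M))^((3:ℝ)-p)) * (κ^((3:ℝ)-p) * |ρ|^p) := by
          rw [e1, e2]
          calc M * (|ρ|^((3:ℝ)-p) * |ρ|^p)
              ≤ M * ((p/(4*M))^((3:ℝ)-p) * κ^((3:ℝ)-p) * |ρ|^p) := by
                apply mul_le_mul_of_nonneg_left _ hM0.le
                apply mul_le_mul_of_nonneg_right _ hX0
                rw [← e4]; exact e3
            _ = M*((p/(4*M))^((3:ℝ)-p)) * (κ^((3:ℝ)-p) * |ρ|^p) := by ring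
        have e6 : M*((p/(4*M))^((3:ℝ)-p)) * (κ^((3:ℝ)-p) * |ρ|^p)
            ≤ (p/4*C) * (κ^((3:ℝ)-p) * |ρ|^p) := by
          apply mul_le_mul_of_nonneg_right _ (mul_nonneg hs0.le hX0)
          rw [hPC]
          linarith [h3p, mul_pos hp0 h2p]
        have e7 : (p/4*C) * (κ^((3:ℝ)-p) * |ρ|^p) ≤ p/4*C*(1+κ^((3:ℝ)-p))* |ρ|^p := by
          have hsplit : p/4*C*(1+κ^((3:ℝ)-p))* |ρ|^p
              = (p/4*C) * (κ^((3:ℝ)-p) * |ρ|^p) + (p/4*C) * |ρ|^p := by ring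
          rw [hsplit]
          linarith [mul_nonneg hpc.le hX0]
        have hq : (0:ℝ) ≤ p/4*κ*ρ^2 :=
          mul_nonneg (mul_nonneg (by linarith) hκ.le) (sq_nonneg ρ)
        linarith
    have hexpand : (p*(p-1)/2 + p/4*κ)*ρ^2 = (p*(p-1)/2)*ρ^2 + p/4*κ*ρ^2 := by ring
    rw [hexpand]
    linarith
  · -- large ρ
    have hL : |1+ρ|^p ≤ (3:ℝ)^p * |ρ|^p := by
      have ha : |1+ρ| ≤ 3 * |ρ| := by
        calc |1+ρ| ≤ |(1:ℝ)| + |ρ| := abs_add_le 1 ρ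
          _ = 1 + |ρ| := by norm_num
          _ ≤ 3*|ρ| := by linarith
      calc |1+ρ|^p ≤ (3*|ρ|)^p := Real.rpow_le_rpow (abs_nonneg _) ha hp0.le
        _ = 3^p * |ρ|^p := Real.mul_rpow (by norm_num) (abs_nonneg ρ)
    have hρ0 : (0:ℝ) < |ρ| := by linarith
    have hr2 : |ρ| ≤ (2:ℝ)^(p-1) * |ρ|^p := by
      have ha : ((1:ℝ)/2)^(p-1) ≤ |ρ|^(p-1) :=
        Real.rpow_le_rpow (by norm_num) hr.le (by linarith)
      have hb : |ρ|^p = |ρ|^(p-1) * |ρ| := by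
        rw [← Real.rpow_add_one (ne_of_gt hρ0)]; norm_num
      have hc : (2:ℝ)^(p-1) * ((1:ℝ)/2)^(p-1) = 1 := by
        rw [← Real.mul_rpow (by norm_num) (by norm_num)]
        norm_num
      calc |ρ| = ((2:ℝ)^(p-1) * ((1:ℝ)/2)^(p-1)) * |ρ| := by rw [hc]; ring
        _ ≤ ((2:ℝ)^(p-1) * |ρ|^(p-1)) * |ρ| := by
            apply mul_le_mul_of_nonneg_right _ (abs_nonneg ρ)
            exact mul_le_mul_of_nonneg_left ha (by positivity)
        _ = (2:ℝ)^(p-1) * |ρ|^p := by rw [hb]; ring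
    have hB : (3:ℝ)^p + p*(2:ℝ)^(p-1) ≤ p/4*C*(1+κ^((3:ℝ)-p)) := by
      have hpc : (0:ℝ) < p/4*C := mul_pos (div_pos hp0 (by norm_num)) hC0
      nlinarith [hPC, mul_pos hpc hs0, mul_pos hM0 hpM]
    have hq0 : (0:ℝ) ≤ (p*(p-1)/2 + p/4*κ)*ρ^2 := by
      apply mul_nonneg _ (sq_nonneg ρ)
      nlinarith [mul_pos hp0 hκ]
    have hf1 := mul_le_mul_of_nonneg_right hB hX0
    have hf2 := mul_le_mul_of_nonneg_left hr2 hp0.le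
    have hf3 := mul_le_mul_of_nonneg_left (neg_abs_le ρ) hp0.le
    nlinarith [hf1, hf2, hf3, hL, hq0, hX0]


end S2Stab
end
end

section
/- Let d ≥ 1 be an integer, let S^d be the unit sphere in R^{d+1} with its standard surface measure dω, and let α > d. Then there is a constant C depending only on d and α such that for all ξ in the open unit ball B₁(0) ⊂ R^{d+1}, ∫_{S^d} |ω − ξ|^{−α} dω ≤ C (1 − |ξ|²)^{d − α}. -/
noncomputable section

open MeasureTheory Metric Filter
open scoped RealInnerProductSpace Topology ENNReal

namespace S2Stab

variable (d : ℕ)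

open Set in
open scoped Pointwise in
lemma cap_bound : ∃ C : ℝ, 0 < C ∧ ∀ (ξ : E d) (t : ℝ), 0 < t → t ≤ 1 →
    sphMeas d {ω : Sph d | ‖(ω : E d) - ξ‖ < t} ≤ ENNReal.ofReal (C * t ^ d) := by
  have hvbfin : (volume (ball (0 : E d) 1)) ≠ ⊤ := measure_ball_lt_top.ne
  set vb : ℝ := (volume (ball (0 : E d) 1)).toReal with hvb
  have hvbpos : 0 < vb := ENNReal.toReal_pos (measure_ball_pos _ _ one_pos).ne' hvbfin
  refine ⟨(d + 1) * 2 ^ (d + 2) * vb, by positivity, ?_⟩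
  intro ξ t ht ht1
  set s : Set (Sph d) := {ω : Sph d | ‖(ω : E d) - ξ‖ < t} with hsdef
  have hcont : Continuous fun ω : Sph d => ‖(ω : E d) - ξ‖ :=
    (continuous_subtype_val.sub continuous_const).norm
  have hs : MeasurableSet s := measurableSet_lt hcont.measurable measurable_const
  have key : sphMeas d s
      = (Module.finrank ℝ (E d)) * volume (Ioo (0:ℝ) 1 • ((↑) '' s : Set (E d))) :=
    Measure.toSphere_apply' _ hs
  set A : Set (E d) := Ioo (0:ℝ) 1 • ((↑) '' s : Set (E d)) with hA
  set a : ℝ := 1 / (1 + t) with ha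
  have ha0 : 0 < a := by positivity
  have ha1 : a ≤ 1 := by rw [ha, div_le_one (by linarith)]; linarith
  -- membership in A
  have hmemA : ∀ x ∈ A, ∃ ρ : ℝ, ∃ ω : Sph d, ω ∈ s ∧ 0 < ρ ∧ ρ < 1 ∧ x = ρ • (ω : E d) := by
    intro x hx
    rcases Set.mem_smul.mp hx with ⟨ρ, hρ, v, hv, hxe⟩
    rcases hv with ⟨ω, hω, rfl⟩
    exact ⟨ρ, ω, hω, hρ.1, hρ.2, hxe.symm⟩
  have hsub : A ⊆ (a • A) ∪ ball ξ (2 * t) := by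
    intro x hx
    rcases hmemA x hx with ⟨ρ, ω, hω, hρ0, hρ1, rfl⟩
    have hnω : ‖(ω : E d)‖ = 1 := mem_sphere_zero_iff_norm.mp ω.2
    have hae : a * (1 + t) = 1 := by rw [ha]; field_simp
    have ha1' : a < 1 := by rw [ha]; rw [div_lt_one (by linarith)]; linarith
    rcases lt_or_ge ρ a with hρa | haρ
    · left
      have : (ρ / a) • (ω : E d) ∈ A := by
        refine Set.mem_smul.mpr ⟨ρ / a, ⟨by positivity, ?_⟩, (ω : E d), ⟨ω, hω, rfl⟩, rfl⟩
        rw [div_lt_one ha0]; exact hρa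
      have := Set.smul_mem_smul_set (a := a) this
      rwa [smul_smul, mul_div_cancel₀ _ ha0.ne'] at this
    · right
      rw [mem_ball, dist_eq_norm]
      have h1 : ρ • (ω : E d) - ξ = (ρ - 1) • (ω : E d) + ((ω : E d) - ξ) := by
        module
      have h2 : ‖(ρ - 1) • (ω : E d)‖ = 1 - ρ := by
        rw [norm_smul, hnω, mul_one, Real.norm_eq_abs, abs_of_nonpos (by linarith)]
        ring
      have h3 : 1 - ρ < t := by nlinarith
      calc ‖ρ • (ω : E d) - ξ‖ ≤ ‖(ρ - 1) • (ω : E d)‖ + ‖(ω : E d) - ξ‖ := by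
            rw [h1]; exact norm_add_le _ _
        _ < 2 * t := by rw [h2]; have := hω; simp only [hsdef, Set.mem_setOf_eq] at this; linarith
  have hAball : A ⊆ ball (0 : E d) 1 := by
    intro x hx
    rcases hmemA x hx with ⟨ρ, ω, _, hρ0, hρ1, rfl⟩
    have hnω : ‖(ω : E d)‖ = 1 := mem_sphere_zero_iff_norm.mp ω.2
    rw [mem_ball, dist_zero_right, norm_smul, hnω, mul_one, Real.norm_eq_abs,
      abs_of_pos hρ0]
    exact hρ1
  have hAfin : volume A ≠ ⊤ :=
    ((measure_mono hAball).trans_lt measure_ball_lt_top).ne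
  have hdim : Module.finrank ℝ (E d) = d + 1 := finrank_euclideanSpace_fin
  have hmeas1 : volume A ≤ ENNReal.ofReal (a ^ (d+1)) * volume A
      + ENNReal.ofReal ((2*t) ^ (d+1)) * volume (ball (0 : E d) 1) := by
    calc volume A ≤ volume ((a • A) ∪ ball ξ (2 * t)) := measure_mono hsub
      _ ≤ volume (a • A) + volume (ball ξ (2*t)) := measure_union_le _ _
      _ = ENNReal.ofReal (a ^ (d+1)) * volume A
          + ENNReal.ofReal ((2*t) ^ (d+1)) * volume (ball (0 : E d) 1) := by
          rw [Measure.addHaar_smul_of_nonneg _ ha0.le, Measure.addHaar_ball _ _ (by positivity),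
            hdim]
  set VA : ℝ := (volume A).toReal with hVA
  have hVAnn : 0 ≤ VA := ENNReal.toReal_nonneg
  have hreal : VA ≤ a ^ (d+1) * VA + (2*t) ^ (d+1) * vb := by
    have h := ENNReal.toReal_mono (by
      refine ENNReal.add_ne_top.mpr ⟨?_, ?_⟩
      · exact ENNReal.mul_ne_top ENNReal.ofReal_ne_top hAfin
      · exact ENNReal.mul_ne_top ENNReal.ofReal_ne_top hvbfin) hmeas1
    rwa [ENNReal.toReal_add (ENNReal.mul_ne_top ENNReal.ofReal_ne_top hAfin)
        (ENNReal.mul_ne_top ENNReal.ofReal_ne_top hvbfin), ENNReal.toReal_mul,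
      ENNReal.toReal_mul, ENNReal.toReal_ofReal (by positivity),
      ENNReal.toReal_ofReal (by positivity)] at h
  -- deduce VA ≤ 2^(d+2) * t^d * vb
  have hae : a * (1 + t) = 1 := by rw [ha]; field_simp
  have hapow : a ^ (d+1) ≤ a := by
    calc a ^ (d+1) = a ^ d * a := pow_succ a d
      _ ≤ 1 * a := mul_le_mul_of_nonneg_right (pow_le_one₀ ha0.le ha1) ha0.le
      _ = a := one_mul a
  have h1a : t / 2 ≤ 1 - a := by nlinarith
  have hVAle : VA ≤ 2 ^ (d+2) * t ^ d * vb := by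
    have key1 : VA * (t / 2) ≤ (2*t)^(d+1) * vb := by
      nlinarith [mul_le_mul_of_nonneg_left hapow hVAnn]
    have h2t : (2*t)^(d+1) = 2^(d+1) * (t^d * t) := by rw [mul_pow]; ring
    have h2 : (2:ℝ)^(d+2) = 2 * 2^(d+1) := by ring
    have hchain : VA * t ≤ (2^(d+2) * t^d * vb) * t := by
      calc VA * t = (VA * (t/2)) * 2 := by ring
        _ ≤ ((2*t)^(d+1) * vb) * 2 := mul_le_mul_of_nonneg_right key1 (by norm_num)
        _ = (2^(d+2) * t^d * vb) * t := by rw [h2t, h2]; ring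
    exact le_of_mul_le_mul_right hchain ht
  -- conclude
  rw [key, hdim]
  have : volume A = ENNReal.ofReal VA := (ENNReal.ofReal_toReal hAfin).symm
  rw [this]
  calc ((d+1 : ℕ) : ℝ≥0∞) * ENNReal.ofReal VA
      = ENNReal.ofReal (((d+1 : ℕ) : ℝ) * VA) := by
        rw [ENNReal.ofReal_mul (by positivity), ENNReal.ofReal_natCast]
    _ ≤ ENNReal.ofReal ((d + 1) * 2 ^ (d + 2) * vb * t ^ d) := by
        apply ENNReal.ofReal_le_ofReal
        push_cast
        nlinarith [hVAle, pow_pos ht d]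

set_option maxHeartbeats 2000000 in
/-- **Elementary integral estimate.** For α > d there is C = C(d,α) such that for all ξ in the
open unit ball of ℝ^{d+1}, ∫_{S^d} |ω − ξ|^{−α} dω ≤ C (1 − |ξ|²)^{d−α}. -/
theorem sphere_singular_integral (d : ℕ) (hd : 1 ≤ d) (α : ℝ) (hα : (d : ℝ) < α) :
    ∃ C : ℝ, 0 < C ∧ ∀ ξ : E d, ‖ξ‖ < 1 →
      (∫ ω, ‖(ω : E d) - ξ‖ ^ (-α) ∂sphMeas d)
        ≤ C * (1 - ‖ξ‖ ^ 2) ^ ((d : ℝ) - α) := by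
  obtain ⟨C₂, hC₂, hcap⟩ := cap_bound d
  haveI : IsFiniteMeasure (sphMeas d) := by unfold sphMeas; infer_instance
  set V : ℝ := (sphMeas d Set.univ).toReal with hVdef
  have hVnn : 0 ≤ V := ENNReal.toReal_nonneg
  have hα0 : 0 < α := lt_of_le_of_lt (Nat.cast_nonneg d) hα
  have hαd : 0 < α - d := by linarith
  set C₃ : ℝ := C₂ + V with hC₃
  have hC₃p : 0 < C₃ := by positivity
  set r : ℝ := -((d:ℝ)/α) with hr
  have hr1 : -1 < r := by
    rw [hr]; have : (d:ℝ)/α < 1 := (div_lt_one hα0).mpr hα; linarith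
  have hrp1 : r + 1 = (α - d)/α := by rw [hr]; field_simp; ring
  set C₄ : ℝ := C₃ * (α/(α - d)) with hC₄
  have hC₄p : 0 < C₄ := by rw [hC₄]; positivity
  refine ⟨C₄ * 2 ^ (α - (d:ℝ)), mul_pos hC₄p (Real.rpow_pos_of_pos two_pos _), ?_⟩
  intro ξ hξ
  set δ : ℝ := 1 - ‖ξ‖ with hδ
  have hδ0 : 0 < δ := sub_pos.mpr hξ
  have hδ1 : δ ≤ 1 := by have := norm_nonneg ξ; rw [hδ]; linarith
  have hdist : ∀ ω : Sph d, δ ≤ ‖(ω : E d) - ξ‖ := by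
    intro ω
    have h1 : ‖(ω : E d)‖ = 1 := mem_sphere_zero_iff_norm.mp ω.2
    have h2 := norm_sub_norm_le (ω : E d) ξ
    rw [h1] at h2; rw [hδ]; linarith
  set f : Sph d → ℝ := fun ω => ‖(ω : E d) - ξ‖ ^ (-α) with hf
  have hf_nn : ∀ ω, 0 ≤ f ω := fun ω => Real.rpow_nonneg (norm_nonneg _) _
  have hf_meas : Measurable f := by
    have hcont : Continuous fun ω : Sph d => ‖(ω : E d) - ξ‖ :=
      (continuous_subtype_val.sub continuous_const).norm
    have hfc : Continuous f :=
      hcont.rpow_const fun ω => Or.inl (ne_of_gt (lt_of_lt_of_le hδ0 (hdist ω)))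
    exact hfc.measurable
  set T : ℝ := δ ^ (-α) with hT
  have hTpos : 0 < T := Real.rpow_pos_of_pos hδ0 _
  have hT1 : 1 ≤ T := Real.one_le_rpow_of_pos_of_le_one_of_nonpos hδ0 hδ1 (by linarith)
  have hfT : ∀ ω, f ω ≤ T := fun ω => Real.rpow_le_rpow_of_nonpos hδ0 (hdist ω) (by linarith)
  have heq : (∫ ω, f ω ∂sphMeas d)
      = (∫⁻ ω, ENNReal.ofReal (f ω) ∂sphMeas d).toReal :=
    integral_eq_lintegral_of_nonneg_ae (ae_of_all _ hf_nn) hf_meas.aestronglyMeasurable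
  have hlayer : (∫⁻ ω, ENNReal.ofReal (f ω) ∂sphMeas d)
      = ∫⁻ u in Set.Ioi 0, sphMeas d {ω | u < f ω} :=
    lintegral_eq_lintegral_meas_lt _ (ae_of_all _ hf_nn) hf_meas.aemeasurable
  have hptwise : ∀ u ∈ Set.Ioi (0:ℝ), sphMeas d {ω | u < f ω}
      ≤ Set.indicator (Set.Ioc 0 T) (fun u => ENNReal.ofReal (C₃ * u ^ r)) u := by
    intro u hu
    have hu0 : (0:ℝ) < u := hu
    rcases le_or_gt u T with huT | huT
    · have humem : u ∈ Set.Ioc 0 T := Set.mem_Ioc.mpr ⟨hu0, huT⟩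
      rw [Set.indicator_of_mem humem]
      set s : ℝ := u ^ (-α⁻¹) with hs
      have hs0 : 0 < s := Real.rpow_pos_of_pos hu0 _
      have hsd : s ^ d = u ^ r := by
        rw [hs, ← Real.rpow_natCast (u ^ (-α⁻¹)) d, ← Real.rpow_mul hu0.le, hr]
        congr 1
        field_simp
      have hsubset : {ω : Sph d | u < f ω} ⊆ {ω : Sph d | ‖(ω : E d) - ξ‖ < s} := by
        intro ω hω
        simp only [Set.mem_setOf_eq] at hω ⊢
        have hy0 : 0 < ‖(ω : E d) - ξ‖ := lt_of_lt_of_le hδ0 (hdist ω)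
        have hexpneg : -α⁻¹ < 0 := by
          have : 0 < α⁻¹ := by positivity
          linarith
        have h1 : (‖(ω : E d) - ξ‖ ^ (-α)) ^ (-α⁻¹) < u ^ (-α⁻¹) :=
          Real.rpow_lt_rpow_of_neg hu0 hω hexpneg
        have hexp : (-α) * (-α⁻¹) = 1 := by field_simp
        rwa [← Real.rpow_mul (norm_nonneg _), hexp, Real.rpow_one] at h1
      rcases le_or_gt s 1 with hs1 | hs1
      · calc sphMeas d {ω | u < f ω}
            ≤ sphMeas d {ω : Sph d | ‖(ω : E d) - ξ‖ < s} := measure_mono hsubset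
          _ ≤ ENNReal.ofReal (C₂ * s ^ d) := hcap ξ s hs0 hs1
          _ ≤ ENNReal.ofReal (C₃ * u ^ r) := by
              apply ENNReal.ofReal_le_ofReal
              rw [← hsd]
              have hsdnn : 0 ≤ s ^ d := by positivity
              nlinarith
      · have hsd1 : (1:ℝ) ≤ u ^ r := by rw [← hsd]; exact one_le_pow₀ hs1.le
        calc sphMeas d {ω | u < f ω}
            ≤ sphMeas d Set.univ := measure_mono (Set.subset_univ _)
          _ = ENNReal.ofReal V := (ENNReal.ofReal_toReal (measure_ne_top _ _)).symm
          _ ≤ ENNReal.ofReal (C₃ * u ^ r) := by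
              apply ENNReal.ofReal_le_ofReal
              nlinarith
    · rw [Set.indicator_of_notMem (fun h => absurd h.2 (not_le.mpr huT))]
      have hempty : {ω : Sph d | u < f ω} = ∅ := by
        ext ω
        simp only [Set.mem_setOf_eq, Set.mem_empty_iff_false, iff_false, not_lt]
        exact (hfT ω).trans huT.le
      simp [hempty]
  have hIbound : (∫⁻ u in Set.Ioi (0:ℝ), sphMeas d {ω | u < f ω})
      ≤ ENNReal.ofReal (C₄ * δ ^ ((d:ℝ) - α)) := by
    have step1 : (∫⁻ u in Set.Ioi (0:ℝ), sphMeas d {ω | u < f ω})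
        ≤ ∫⁻ u in Set.Ioi (0:ℝ),
            Set.indicator (Set.Ioc 0 T) (fun u => ENNReal.ofReal (C₃ * u ^ r)) u := by
      refine lintegral_mono_ae ?_
      filter_upwards [ae_restrict_mem measurableSet_Ioi] with u hu using hptwise u hu
    have step2 : (∫⁻ u in Set.Ioi (0:ℝ),
            Set.indicator (Set.Ioc 0 T) (fun u => ENNReal.ofReal (C₃ * u ^ r)) u)
        = ∫⁻ u in Set.Ioc (0:ℝ) T, ENNReal.ofReal (C₃ * u ^ r) := by
      rw [lintegral_indicator measurableSet_Ioc _, Measure.restrict_restrict measurableSet_Ioc,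
        Set.inter_eq_self_of_subset_left Set.Ioc_subset_Ioi_self]
    have hint : IntegrableOn (fun u : ℝ => C₃ * u ^ r) (Set.Ioc 0 T) :=
      ((intervalIntegral.intervalIntegrable_rpow' (a := 0) (b := T) hr1).1).const_mul C₃
    have step3 : (∫⁻ u in Set.Ioc (0:ℝ) T, ENNReal.ofReal (C₃ * u ^ r))
        = ENNReal.ofReal (∫ u in Set.Ioc (0:ℝ) T, C₃ * u ^ r) := by
      rw [← ofReal_integral_eq_lintegral_ofReal hint ?_]
      filter_upwards [ae_restrict_mem measurableSet_Ioc] with u hu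
      have : 0 ≤ u ^ r := Real.rpow_nonneg hu.1.le _
      positivity
    have step4 : (∫ u in Set.Ioc (0:ℝ) T, C₃ * u ^ r) = C₃ * (T ^ (r+1) / (r+1)) := by
      rw [← intervalIntegral.integral_of_le (by linarith : (0:ℝ) ≤ T),
        intervalIntegral.integral_const_mul, integral_rpow (Or.inl hr1),
        Real.zero_rpow (by linarith : r + 1 ≠ 0)]
      ring
    have hTval : T ^ (r+1) = δ ^ ((d:ℝ) - α) := by
      rw [hT, ← Real.rpow_mul hδ0.le]
      congr 1
      rw [hrp1]
      field_simp
      ring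
    have hval : C₃ * (T ^ (r+1) / (r+1)) = C₄ * δ ^ ((d:ℝ) - α) := by
      rw [hTval, hrp1, hC₄]
      field_simp
    calc (∫⁻ u in Set.Ioi (0:ℝ), sphMeas d {ω | u < f ω})
        ≤ ∫⁻ u in Set.Ioi (0:ℝ),
            Set.indicator (Set.Ioc 0 T) (fun u => ENNReal.ofReal (C₃ * u ^ r)) u := step1
      _ = ENNReal.ofReal (C₄ * δ ^ ((d:ℝ) - α)) := by rw [step2, step3, step4, hval]
  have hmain : (∫ ω, f ω ∂sphMeas d) ≤ C₄ * δ ^ ((d:ℝ) - α) := by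
    rw [heq, hlayer]
    have := ENNReal.toReal_mono ENNReal.ofReal_ne_top hIbound
    rwa [ENNReal.toReal_ofReal (mul_nonneg hC₄p.le (Real.rpow_nonneg hδ0.le _))] at this
  have hsq : 0 < 1 - ‖ξ‖^2 := by nlinarith [norm_nonneg ξ]
  have hle2 : 1 - ‖ξ‖^2 ≤ 2 * δ := by rw [hδ]; nlinarith [norm_nonneg ξ]
  have hlast : δ ^ ((d:ℝ) - α) ≤ 2 ^ (α - (d:ℝ)) * (1 - ‖ξ‖^2) ^ ((d:ℝ) - α) := by
    have h1 : (2*δ) ^ ((d:ℝ) - α) ≤ (1 - ‖ξ‖^2) ^ ((d:ℝ) - α) :=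
      Real.rpow_le_rpow_of_nonpos hsq hle2 (by linarith)
    have h2 : (2*δ) ^ ((d:ℝ) - α) = 2 ^ ((d:ℝ) - α) * δ ^ ((d:ℝ) - α) :=
      Real.mul_rpow (by norm_num) hδ0.le
    have h3 : (2:ℝ) ^ (α - (d:ℝ)) * 2 ^ ((d:ℝ) - α) = 1 := by
      rw [← Real.rpow_add (by norm_num : (0:ℝ) < 2)]
      norm_num
    calc δ ^ ((d:ℝ) - α) = 2 ^ (α - (d:ℝ)) * (2*δ) ^ ((d:ℝ) - α) := by
          rw [h2, ← mul_assoc, h3, one_mul]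
      _ ≤ 2 ^ (α - (d:ℝ)) * (1 - ‖ξ‖^2) ^ ((d:ℝ) - α) :=
          mul_le_mul_of_nonneg_left h1 (Real.rpow_nonneg (by norm_num) _)
  calc (∫ ω, f ω ∂sphMeas d) ≤ C₄ * δ ^ ((d:ℝ) - α) := hmain
    _ ≤ C₄ * (2 ^ (α - (d:ℝ)) * (1 - ‖ξ‖^2) ^ ((d:ℝ) - α)) :=
        mul_le_mul_of_nonneg_left hlast hC₄p.le
    _ = C₄ * 2 ^ (α - (d:ℝ)) * (1 - ‖ξ‖^2) ^ ((d:ℝ) - α) := by ring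
end S2Stab
end
end

section
/- Let d > 4 be an integer. For every δ > 0 and every ξ in the open unit ball B₁(0) ⊂ R^{d+1}, the function 1 + δ (1)_{Ψ_ξ} on S^d satisfies σ₁(1 + δ (1)_{Ψ_ξ}) > 0 pointwise on S^d, where (1)_{Ψ_ξ} := J_{Ψ_ξ}^{(d−4)/(4d)}. More precisely, σ₁(1 + δ(1)_{Ψ_ξ})(ω) = (d/2)((d−4)/4)² ( 1 + δ² (1)_{Ψ_ξ}(ω)^{2d/(d−4)} + δ (1)_{Ψ_ξ}(ω) Q_{|ξ|}(ξ·ω)/|ω−ξ|⁴ ), with Q_{|ξ|}(t) := 2( −|ξ|² + t² + 2t(1 − 2t + |ξ|²) + (1 − 2t + |ξ|²)² ), and Q_{|ξ|}(ξ·ω) > 0 for all ω ∈ S^d. -/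
noncomputable section

open MeasureTheory Metric Filter
open scoped RealInnerProductSpace Topology ENNReal

section SigmaAux

open Real

variable {F : Type*} [NormedAddCommGroup F] [InnerProductSpace ℝ F]

/-- Ambient extension of `1 - 2⟪ξ,x/|x|⟫ + |ξ|²`. -/
def phiA (ξ x : F) : ℝ := 1 - 2 * (⟪ξ, x⟫ * ‖x‖⁻¹) + ‖ξ‖ ^ 2

lemma phiA_pos {ξ : F} (hξ : ‖ξ‖ < 1) {x : F} (hx : x ≠ 0) : 0 < phiA ξ x := by
  have h := abs_real_inner_le_norm ξ x
  have hn : (0:ℝ) < ‖x‖ := norm_pos_iff.mpr hx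
  have h2 : ⟪ξ, x⟫ * ‖x‖⁻¹ ≤ ‖ξ‖ := by
    have h' : ⟪ξ, x⟫ ≤ ‖ξ‖ * ‖x‖ := (le_abs_self _).trans h
    have := mul_le_mul_of_nonneg_right h' (le_of_lt (inv_pos.mpr hn))
    rwa [mul_assoc, mul_inv_cancel₀ hn.ne', mul_one] at this
  have hξ0 : (0:ℝ) ≤ ‖ξ‖ := norm_nonneg ξ
  unfold phiA
  nlinarith [sq_nonneg (1 - ‖ξ‖)]

def DphiA (ξ x : F) : F →L[ℝ] ℝ :=
  ((-2) * ‖x‖⁻¹) • innerSL ℝ ξ + (2 * ⟪ξ, x⟫ * (‖x‖ ^ 3)⁻¹) • innerSL ℝ x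

lemma hasFDerivAt_norm'' (x : F) (hx : x ≠ 0) :
    HasFDerivAt (fun y : F => ‖y‖) (‖x‖⁻¹ • innerSL ℝ x) x := by
  have h1 : HasFDerivAt (fun y : F => ⟪y, y⟫) (2 • innerSL ℝ x) x := by
    have := (hasFDerivAt_id x).inner ℝ (hasFDerivAt_id x)
    refine this.congr_fderiv ?_
    ext w
    simp [real_inner_comm, two_smul]
  have hx2 : ⟪x, x⟫ ≠ 0 := by
    simpa [real_inner_self_eq_norm_sq] using pow_ne_zero 2 (norm_ne_zero_iff.mpr hx)
  have h2 := h1.sqrt hx2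
  have heq : (fun y : F => Real.sqrt ⟪y, y⟫) = fun y : F => ‖y‖ := by
    funext y; rw [real_inner_self_eq_norm_sq, Real.sqrt_sq (norm_nonneg y)]
  rw [heq] at h2
  convert h2 using 1
  ext w
  have hn : ‖x‖ ≠ 0 := norm_ne_zero_iff.mpr hx
  rw [real_inner_self_eq_norm_sq, Real.sqrt_sq (norm_nonneg x)]
  simp
  field_simp

lemma hasFDerivAt_invnorm (x : F) (hx : x ≠ 0) :
    HasFDerivAt (fun y : F => ‖y‖⁻¹) ((-(‖x‖ ^ 2)⁻¹) • (‖x‖⁻¹ • innerSL ℝ x)) x := by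
  have hn : ‖x‖ ≠ 0 := norm_ne_zero_iff.mpr hx
  exact (hasDerivAt_inv hn).comp_hasFDerivAt x (hasFDerivAt_norm'' x hx)

lemma hasFDerivAt_phiA (ξ : F) {x : F} (hx : x ≠ 0) :
    HasFDerivAt (phiA ξ) (DphiA ξ x) x := by
  have hn : ‖x‖ ≠ 0 := norm_ne_zero_iff.mpr hx
  have h1 : HasFDerivAt (fun y : F => ⟪ξ, y⟫) (innerSL ℝ ξ) x :=
    (innerSL ℝ ξ).hasFDerivAt
  have h3 := h1.mul (hasFDerivAt_invnorm x hx)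
  have h4 := ((h3.const_mul (2:ℝ)).const_sub (1:ℝ)).add_const (‖ξ‖ ^ 2)
  have heq : phiA ξ = fun y => 1 - 2 * (⟪ξ, y⟫ * ‖y‖⁻¹) + ‖ξ‖ ^ 2 := rfl
  rw [heq]
  refine h4.congr_fderiv ?_
  ext w
  simp [DphiA]
  field_simp

lemma hasFDerivAt_pow2 {ξ : F} (hξ : ‖ξ‖ < 1) {x : F} (hx : x ≠ 0) (a c1 p1 c2 p2 : ℝ) :
    HasFDerivAt (fun y => a + c1 * phiA ξ y ^ p1 + c2 * phiA ξ y ^ p2)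
      ((c1 * p1 * phiA ξ x ^ (p1 - 1) + c2 * p2 * phiA ξ x ^ (p2 - 1)) • DphiA ξ x) x := by
  have hφ : phiA ξ x ≠ 0 := (phiA_pos hξ hx).ne'
  have h1 := ((hasFDerivAt_phiA ξ hx).rpow_const (p := p1) (Or.inl hφ)).const_mul c1
  have h2 := ((hasFDerivAt_phiA ξ hx).rpow_const (p := p2) (Or.inl hφ)).const_mul c2
  have h := (h1.const_add a).add h2
  refine h.congr_fderiv ?_
  ext w
  simp
  ring

lemma contDiffAt_U {ξ : F} (hξ : ‖ξ‖ < 1) {x : F} (hx : x ≠ 0) (a c1 p1 c2 p2 : ℝ) :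
    ContDiffAt ℝ 2 (fun y => a + c1 * phiA ξ y ^ p1 + c2 * phiA ξ y ^ p2) x := by
  have hφpos := phiA_pos hξ hx
  have h1 : ContDiffAt ℝ 2 (fun y : F => ⟪ξ, y⟫) x := (innerSL ℝ ξ).contDiff.contDiffAt
  have h2 : ContDiffAt ℝ 2 (fun y : F => ‖y‖⁻¹) x :=
    (contDiffAt_norm ℝ hx).inv (norm_ne_zero_iff.mpr hx)
  have hφ : ContDiffAt ℝ 2 (phiA ξ) x := by
    have : ContDiffAt ℝ 2 (fun y : F => 1 - 2 * (⟪ξ, y⟫ * ‖y‖⁻¹) + ‖ξ‖ ^ 2) x :=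
      (contDiffAt_const.sub (contDiffAt_const.mul (h1.mul h2))).add contDiffAt_const
    exact this
  exact (contDiffAt_const.add
      (contDiffAt_const.mul (hφ.rpow_const_of_ne hφpos.ne'))).add
    (contDiffAt_const.mul (hφ.rpow_const_of_ne hφpos.ne'))

lemma key2 {ξ : F} (hξ : ‖ξ‖ < 1) {ω : F} (hω : ‖ω‖ = 1) (w : F) (a c1 p1 c2 p2 : ℝ) :
    fderiv ℝ (fun y => fderiv ℝ (fun z => a + c1 * phiA ξ z ^ p1 + c2 * phiA ξ z ^ p2) y w) ω w
      = (c1 * p1 * (p1 - 1) * phiA ξ ω ^ (p1 - 2) + c2 * p2 * (p2 - 1) * phiA ξ ω ^ (p2 - 2))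
          * (2 * ⟪ξ, ω⟫ * ⟪ω, w⟫ - 2 * ⟪ξ, w⟫) ^ 2
        + (c1 * p1 * phiA ξ ω ^ (p1 - 1) + c2 * p2 * phiA ξ ω ^ (p2 - 1))
          * (4 * ⟪ξ, w⟫ * ⟪ω, w⟫ + 2 * ⟪ξ, ω⟫ * ⟪w, w⟫ - 6 * ⟪ξ, ω⟫ * ⟪ω, w⟫ ^ 2) := by
  have hω0 : ω ≠ 0 := by intro h; rw [h] at hω; simp at hω
  have hev : (fun y => fderiv ℝ (fun z => a + c1 * phiA ξ z ^ p1 + c2 * phiA ξ z ^ p2) y w)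
      =ᶠ[𝓝 ω] (fun y =>
        (0 + c1 * p1 * phiA ξ y ^ (p1 - 1) + c2 * p2 * phiA ξ y ^ (p2 - 1)) *
          ((-2) * ‖y‖⁻¹ * ⟪ξ, w⟫ + 2 * ⟪ξ, y⟫ * (‖y‖ ^ 3)⁻¹ * ⟪y, w⟫)) := by
    filter_upwards [IsOpen.mem_nhds isOpen_compl_singleton
      (by simpa using hω0 : ω ∈ ({0}ᶜ : Set F))] with y hy
    have hy0 : y ≠ 0 := by simpa using hy
    rw [(hasFDerivAt_pow2 hξ hy0 a c1 p1 c2 p2).fderiv]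
    simp [DphiA]
    ring
  rw [hev.fderiv_eq]
  have hinv := hasFDerivAt_invnorm ω hω0
  have hξx : HasFDerivAt (fun y : F => ⟪ξ, y⟫) (innerSL ℝ ξ) ω := (innerSL ℝ ξ).hasFDerivAt
  have hxw : HasFDerivAt (fun y : F => ⟪y, w⟫) (innerSL ℝ w) ω := by
    have h : (fun y : F => ⟪y, w⟫) = fun y => ⟪w, y⟫ := funext fun y => real_inner_comm _ _
    rw [h]; exact (innerSL ℝ w).hasFDerivAt
  have hpow3 : HasFDerivAt (fun y : F => (‖y‖ ^ 3)⁻¹)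
      (‖ω‖⁻¹ • (‖ω‖⁻¹ • ((-(‖ω‖ ^ 2)⁻¹) • (‖ω‖⁻¹ • innerSL ℝ ω))
          + ‖ω‖⁻¹ • ((-(‖ω‖ ^ 2)⁻¹) • (‖ω‖⁻¹ • innerSL ℝ ω)))
        + (‖ω‖⁻¹ * ‖ω‖⁻¹) • ((-(‖ω‖ ^ 2)⁻¹) • (‖ω‖⁻¹ • innerSL ℝ ω))) ω := by
    have h : (fun y : F => (‖y‖ ^ 3)⁻¹) = fun y : F => ‖y‖⁻¹ * (‖y‖⁻¹ * ‖y‖⁻¹) :=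
      funext fun y => by rw [← inv_pow]; ring
    rw [h]
    exact hinv.mul (hinv.mul hinv)
  have hK1 := hasFDerivAt_pow2 hξ hω0 0 (c1 * p1) (p1 - 1) (c2 * p2) (p2 - 1)
  have hBA := ((hinv.const_mul (-2 : ℝ)).mul_const (⟪ξ, w⟫ : ℝ)).add
    (((hξx.const_mul (2 : ℝ)).mul hpow3).mul hxw)
  have hG := hK1.mul hBA
  have hfd : fderiv ℝ (fun y =>
        (0 + c1 * p1 * phiA ξ y ^ (p1 - 1) + c2 * p2 * phiA ξ y ^ (p2 - 1)) *
          ((-2) * ‖y‖⁻¹ * ⟪ξ, w⟫ + 2 * ⟪ξ, y⟫ * (‖y‖ ^ 3)⁻¹ * ⟪y, w⟫)) ω = _ := hG.fderiv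
  rw [hfd]
  simp [DphiA, hω]
  have e1 : p1 - 1 - 1 = p1 - 2 := by ring
  have e2 : p2 - 1 - 1 = p2 - 2 := by ring
  rw [e1, e2]
  ring

variable [CompleteSpace F] in
lemma grad_eval {ξ : F} (hξ : ‖ξ‖ < 1) {ω : F} (hω : ‖ω‖ = 1) (a c1 p1 c2 p2 : ℝ) :
    gradient (fun z => a + c1 * phiA ξ z ^ p1 + c2 * phiA ξ z ^ p2) ω
      = ((c1 * p1 * phiA ξ ω ^ (p1 - 1) + c2 * p2 * phiA ξ ω ^ (p2 - 1)) * (-2)) • ξ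
        + ((c1 * p1 * phiA ξ ω ^ (p1 - 1) + c2 * p2 * phiA ξ ω ^ (p2 - 1))
            * (2 * ⟪ξ, ω⟫)) • ω := by
  have hω0 : ω ≠ 0 := by intro h; rw [h] at hω; simp at hω
  apply HasGradientAt.gradient
  rw [hasGradientAt_iff_hasFDerivAt]
  refine (hasFDerivAt_pow2 hξ hω0 a c1 p1 c2 p2).congr_fderiv ?_
  ext v
  simp [DphiA, inner_add_left, real_inner_smul_left, hω]
  ring

lemma norm_comb {ξ ω : F} (hω : ‖ω‖ = 1) (A B : ℝ) :
    ‖A • ξ + B • ω‖ ^ 2 = A ^ 2 * ‖ξ‖ ^ 2 + 2 * A * B * ⟪ξ, ω⟫ + B ^ 2 := by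
  rw [← real_inner_self_eq_norm_sq, inner_add_add_self]
  simp only [real_inner_smul_left, real_inner_smul_right, real_inner_self_eq_norm_sq, hω,
    real_inner_comm ω ξ, norm_smul, Real.norm_eq_abs, mul_pow, sq_abs]
  ring

lemma secondDeriv_eval {ξ : F} (hξ : ‖ξ‖ < 1) {ω : F} (hω : ‖ω‖ = 1) (w : F)
    (a c1 p1 c2 p2 : ℝ) :
    iteratedFDeriv ℝ 2 (fun z => a + c1 * phiA ξ z ^ p1 + c2 * phiA ξ z ^ p2) ω ![w, w]
      = (c1 * p1 * (p1 - 1) * phiA ξ ω ^ (p1 - 2) + c2 * p2 * (p2 - 1) * phiA ξ ω ^ (p2 - 2))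
          * (2 * ⟪ξ, ω⟫ * ⟪ω, w⟫ - 2 * ⟪ξ, w⟫) ^ 2
        + (c1 * p1 * phiA ξ ω ^ (p1 - 1) + c2 * p2 * phiA ξ ω ^ (p2 - 1))
          * (4 * ⟪ξ, w⟫ * ⟪ω, w⟫ + 2 * ⟪ξ, ω⟫ * ⟪w, w⟫ - 6 * ⟪ξ, ω⟫ * ⟪ω, w⟫ ^ 2) := by
  have hω0 : ω ≠ 0 := by intro h; rw [h] at hω; simp at hω
  have hd : DifferentiableAt ℝ
      (fderiv ℝ (fun z => a + c1 * phiA ξ z ^ p1 + c2 * phiA ξ z ^ p2)) ω :=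
    ((contDiffAt_U hξ hω0 a c1 p1 c2 p2).fderiv_right (m := 1)
      (by norm_num)).differentiableAt one_ne_zero
  have h1 : fderiv ℝ (fun y =>
        fderiv ℝ (fun z => a + c1 * phiA ξ z ^ p1 + c2 * phiA ξ z ^ p2) y w) ω
      = (fderiv ℝ (fderiv ℝ (fun z => a + c1 * phiA ξ z ^ p1 + c2 * phiA ξ z ^ p2)) ω).flip w := by
    have h := fderiv_clm_apply (𝕜 := ℝ)
      (c := fderiv ℝ (fun z => a + c1 * phiA ξ z ^ p1 + c2 * phiA ξ z ^ p2))
      (u := fun _ => w) hd (differentiableAt_const w)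
    simpa using h
  rw [iteratedFDeriv_two_apply]
  have h2 := key2 hξ hω w a c1 p1 c2 p2
  rw [h1] at h2
  simpa using h2

lemma inner_sum_eval {n : ℕ} (ξ ω : EuclideanSpace ℝ (Fin (n + 1))) (hω : ‖ω‖ = 1)
    (K1 K2 : ℝ) :
    ∑ i : Fin (n + 1),
      (K2 * (2 * ⟪ξ, ω⟫ * ⟪ω, EuclideanSpace.single i 1⟫ - 2 * ⟪ξ, EuclideanSpace.single i 1⟫) ^ 2
        + K1 * (4 * ⟪ξ, EuclideanSpace.single i 1⟫ * ⟪ω, EuclideanSpace.single i 1⟫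
            + 2 * ⟪ξ, ω⟫ * ⟪(EuclideanSpace.single i 1 : EuclideanSpace ℝ (Fin (n + 1))),
                EuclideanSpace.single i 1⟫
            - 6 * ⟪ξ, ω⟫ * ⟪ω, EuclideanSpace.single i 1⟫ ^ 2))
      = K2 * (4 * (‖ξ‖ ^ 2 - ⟪ξ, ω⟫ ^ 2)) + K1 * (2 * (n : ℝ) * ⟪ξ, ω⟫) := by
  have hsum : ∀ a b : EuclideanSpace ℝ (Fin (n + 1)), ∑ i, a i * b i = ⟪a, b⟫ := fun a b => by
    simp [PiLp.inner_apply, mul_comm]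
  set s : ℝ := ⟪ξ, ω⟫ with hs
  have step1 : ∀ i : Fin (n + 1),
      (K2 * (2 * s * ⟪ω, EuclideanSpace.single i 1⟫ - 2 * ⟪ξ, EuclideanSpace.single i 1⟫) ^ 2
        + K1 * (4 * ⟪ξ, EuclideanSpace.single i 1⟫ * ⟪ω, EuclideanSpace.single i 1⟫
            + 2 * s * ⟪(EuclideanSpace.single i 1 : EuclideanSpace ℝ (Fin (n + 1))),
                EuclideanSpace.single i 1⟫
            - 6 * s * ⟪ω, EuclideanSpace.single i 1⟫ ^ 2))
      = (4 * K2 * s ^ 2 - 6 * K1 * s) * (ω i * ω i)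
          + (-8 * K2 * s + 4 * K1) * (ξ i * ω i) + (4 * K2) * (ξ i * ξ i) + 2 * K1 * s := by
    intro i
    rw [EuclideanSpace.inner_single_right, EuclideanSpace.inner_single_right,
      EuclideanSpace.inner_single_right]
    simp [EuclideanSpace.single_apply]
    ring
  rw [Finset.sum_congr rfl (fun i _ => step1 i)]
  rw [Finset.sum_add_distrib, Finset.sum_add_distrib, Finset.sum_add_distrib,
    ← Finset.mul_sum, ← Finset.mul_sum, ← Finset.mul_sum, Finset.sum_const]
  rw [hsum ω ω, hsum ξ ω, hsum ξ ξ]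
  rw [real_inner_self_eq_norm_sq, real_inner_self_eq_norm_sq, hω, ← hs]
  simp only [Finset.card_univ, Fintype.card_fin, nsmul_eq_mul]
  push_cast
  ring

end SigmaAux


namespace S2Stab


open Real

lemma pt_coe {d : ℕ} {x : E d} (hx : x ≠ 0) : ((pt d x : Sph d) : E d) = ‖x‖⁻¹ • x := by
  simp only [pt, dif_neg hx]

lemma sph_norm {d : ℕ} (ω : Sph d) : ‖(ω : E d)‖ = 1 := by
  have := ω.2
  rwa [mem_sphere_zero_iff_norm] at this

lemma sph_ne_zero {d : ℕ} (ω : Sph d) : (ω : E d) ≠ 0 := by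
  intro h
  have := sph_norm ω
  rw [h] at this
  simp at this

lemma phiA_scale {F : Type*} [NormedAddCommGroup F] [InnerProductSpace ℝ F]
    (ξ : F) {x : F} (hx : x ≠ 0) : phiA ξ (‖x‖⁻¹ • x) = phiA ξ x := by
  have hn : ‖x‖ ≠ 0 := norm_ne_zero_iff.mpr hx
  unfold phiA
  rw [real_inner_smul_right, norm_smul, Real.norm_eq_abs,
    abs_of_nonneg (inv_nonneg.mpr (norm_nonneg x))]
  congr 2
  field_simp

lemma confPush_eq {d : ℕ} (hd : 4 < d) (ξ : E d) (hξ : ‖ξ‖ < 1) (ω : Sph d) :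
    confPush d (mobOf d ξ hξ) (fun _ => 1) ω
      = (1 - ‖ξ‖ ^ 2) ^ (((d : ℝ) - 4) / 4) * phiA ξ (ω : E d) ^ (-(((d : ℝ) - 4) / 4)) := by
  have hω : ‖(ω : E d)‖ = 1 := sph_norm ω
  have hω0 : (ω : E d) ≠ 0 := sph_ne_zero ω
  have hq1 : ‖ξ‖ ^ 2 < 1 := by nlinarith [norm_nonneg ξ]
  have hφpos : 0 < phiA ξ (ω : E d) := phiA_pos hξ hω0
  have hφval : phiA ξ (ω : E d) = 1 - 2 * ⟪ξ, (ω : E d)⟫ + ‖ξ‖ ^ 2 := by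
    unfold phiA
    rw [hω]
    norm_num
  have hD0 : ((d : ℝ)) ≠ 0 := by positivity
  have hb : (0 : ℝ) ≤ (1 - ‖ξ‖ ^ 2) / phiA ξ (ω : E d) := div_nonneg (by linarith) hφpos.le
  unfold confPush Mobius.jac mobOf
  simp only [mul_one]
  rw [← hφval]
  rw [← Real.rpow_natCast ((1 - ‖ξ‖ ^ 2) / phiA ξ (ω : E d)) d, ← Real.rpow_mul hb]
  rw [show (d : ℝ) * (((d : ℝ) - 4) / (4 * (d : ℝ))) = ((d : ℝ) - 4) / 4 by field_simp]
  rw [Real.div_rpow (by linarith) hφpos.le, div_eq_mul_inv, ← Real.rpow_neg hφpos.le]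

lemma ext_val {d : ℕ} (hd : 4 < d) (δ : ℝ) (ξ : E d) (hξ : ‖ξ‖ < 1) {x : E d} (hx : x ≠ 0) :
    ext d (fun ω' => 1 + δ * confPush d (mobOf d ξ hξ) (fun _ => 1) ω') x
      = 1 + δ * ((1 - ‖ξ‖ ^ 2) ^ (((d : ℝ) - 4) / 4) * phiA ξ x ^ (-(((d : ℝ) - 4) / 4))) := by
  show 1 + δ * confPush d (mobOf d ξ hξ) (fun _ => 1) (pt d x) = _
  rw [confPush_eq hd ξ hξ (pt d x), pt_coe hx, phiA_scale ξ hx]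


set_option maxHeartbeats 2000000 in
/-- **Positivity of σ₁ for perturbed bubbles.** For every δ > 0 and ξ ∈ B₁(0),
σ₁(1 + δ(1)_{Ψ_ξ}) > 0 pointwise; more precisely
σ₁(1 + δ(1)_{Ψ_ξ}) = (d/2)((d−4)/4)²(1 + δ²(1)_{Ψ_ξ}^{2d/(d−4)} + δ(1)_{Ψ_ξ} Q_{|ξ|}(ξ·ω)/|ω−ξ|⁴)
with Q_{|ξ|}(t) = 2(−|ξ|² + t² + 2t(1−2t+|ξ|²) + (1−2t+|ξ|²)²), and Q_{|ξ|}(ξ·ω) > 0. -/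
theorem sigma1_positive_bubble (d : ℕ) (hd : 4 < d) (δ : ℝ) (hδ : 0 < δ)
    (ξ : E d) (hξ : ‖ξ‖ < 1) :
    (∀ ω : Sph d,
        0 < sigma1 d (fun ω' => 1 + δ * confPush d (mobOf d ξ hξ) (fun _ => 1) ω') ω) ∧
    ∀ ω : Sph d,
      (sigma1 d (fun ω' => 1 + δ * confPush d (mobOf d ξ hξ) (fun _ => 1) ω') ω
          = ((d : ℝ) / 2) * (((d : ℝ) - 4) / 4) ^ 2 *
            (1 + δ ^ 2 * (confPush d (mobOf d ξ hξ) (fun _ => 1) ω) ^ (2 * (d : ℝ) / ((d : ℝ) - 4))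
              + δ * confPush d (mobOf d ξ hξ) (fun _ => 1) ω *
                (2 * (-(‖ξ‖ ^ 2) + ⟪ξ, (ω : E d)⟫ ^ 2
                    + 2 * ⟪ξ, (ω : E d)⟫ * (1 - 2 * ⟪ξ, (ω : E d)⟫ + ‖ξ‖ ^ 2)
                    + (1 - 2 * ⟪ξ, (ω : E d)⟫ + ‖ξ‖ ^ 2) ^ 2))
                / ‖(ω : E d) - ξ‖ ^ 4))
        ∧ 0 < 2 * (-(‖ξ‖ ^ 2) + ⟪ξ, (ω : E d)⟫ ^ 2
            + 2 * ⟪ξ, (ω : E d)⟫ * (1 - 2 * ⟪ξ, (ω : E d)⟫ + ‖ξ‖ ^ 2)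
            + (1 - 2 * ⟪ξ, (ω : E d)⟫ + ‖ξ‖ ^ 2) ^ 2) := by
  have hD : (4:ℝ) < (d:ℝ) := by exact_mod_cast hd
  have hd4 : ((d:ℝ)) - 4 ≠ 0 := by linarith
  have hD0 : ((d:ℝ)) ≠ 0 := by linarith
  have hq1 : ‖ξ‖ ^ 2 < 1 := by nlinarith [norm_nonneg ξ]
  set A : ℝ := ((d:ℝ) - 4)/4 with hA
  have hApos : 0 < A := by rw [hA]; linarith
  set c : ℝ := (1 - ‖ξ‖ ^ 2) ^ A with hc
  have hcpos : 0 < c := Real.rpow_pos_of_pos (by linarith) A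
  have hQ : ∀ ω : Sph d, 0 < 2 * (-(‖ξ‖ ^ 2) + ⟪ξ, (ω : E d)⟫ ^ 2
      + 2 * ⟪ξ, (ω : E d)⟫ * (1 - 2 * ⟪ξ, (ω : E d)⟫ + ‖ξ‖ ^ 2)
      + (1 - 2 * ⟪ξ, (ω : E d)⟫ + ‖ξ‖ ^ 2) ^ 2) := by
    intro ω
    have hs := abs_real_inner_le_norm ξ (ω : E d)
    rw [sph_norm ω, mul_one] at hs
    obtain ⟨hs1, hs2⟩ := abs_le.mp hs
    have h0 : 0 ≤ ‖ξ‖ := norm_nonneg ξ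
    have h1 : 0 < 1 - ⟪ξ, (ω : E d)⟫ + ‖ξ‖^2 - ‖ξ‖ := by nlinarith [sq_nonneg (1 - ‖ξ‖)]
    have h2 : 0 < 1 - ⟪ξ, (ω : E d)⟫ + ‖ξ‖^2 + ‖ξ‖ := by nlinarith
    nlinarith [mul_pos h1 h2]
  have keyEq : ∀ ω : Sph d,
      sigma1 d (fun ω' => 1 + δ * confPush d (mobOf d ξ hξ) (fun _ => 1) ω') ω
        = ((d : ℝ) / 2) * (((d : ℝ) - 4) / 4) ^ 2 *
            (1 + δ ^ 2 * (confPush d (mobOf d ξ hξ) (fun _ => 1) ω) ^ (2 * (d : ℝ) / ((d : ℝ) - 4))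
              + δ * confPush d (mobOf d ξ hξ) (fun _ => 1) ω *
                (2 * (-(‖ξ‖ ^ 2) + ⟪ξ, (ω : E d)⟫ ^ 2
                    + 2 * ⟪ξ, (ω : E d)⟫ * (1 - 2 * ⟪ξ, (ω : E d)⟫ + ‖ξ‖ ^ 2)
                    + (1 - 2 * ⟪ξ, (ω : E d)⟫ + ‖ξ‖ ^ 2) ^ 2))
                / ‖(ω : E d) - ξ‖ ^ 4) := by
    intro ω
    have hω : ‖(ω : E d)‖ = 1 := sph_norm ω
    have hω0 : (ω : E d) ≠ 0 := sph_ne_zero ω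
    have hφpos : 0 < phiA ξ (ω : E d) := phiA_pos hξ hω0
    set s : ℝ := ⟪ξ, (ω : E d)⟫ with hsdef
    have hφval : phiA ξ (ω : E d) = 1 - 2 * s + ‖ξ‖ ^ 2 := by
      unfold phiA
      rw [hω, inv_one, mul_one, ← hsdef]
    set X : ℝ := phiA ξ (ω : E d) ^ (-A) with hX
    have hXpos : 0 < X := Real.rpow_pos_of_pos hφpos _
    set u : Sph d → ℝ := fun ω' => 1 + δ * confPush d (mobOf d ξ hξ) (fun _ => 1) ω' with hu
    have hext1 : ∀ y : E d, y ≠ 0 → ext d u y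
        = 1 + (δ*c) * phiA ξ y ^ (-A) + 0 * phiA ξ y ^ (0:ℝ) := by
      intro y hy
      rw [hu, ext_val hd δ ξ hξ hy, ← hA, ← hc]
      ring
    have hext2 : ∀ y : E d, y ≠ 0 → ext d (fun ω' => u ω' ^ 2) y
        = 1 + (2*(δ*c)) * phiA ξ y ^ (-A) + ((δ*c)*(δ*c)) * phiA ξ y ^ (-A + -A) := by
      intro y hy
      have h0 : ext d (fun ω' => u ω' ^ 2) y = (ext d u y) ^ 2 := rfl
      rw [h0, hext1 y hy, Real.rpow_add (phiA_pos hξ hy)]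
      ring
    have hmem : (ω : E d) ∈ ({0}ᶜ : Set (E d)) := by simpa using hω0
    have hev2 : ext d (fun ω' => u ω' ^ 2) =ᶠ[𝓝 ((ω : E d))]
        (fun y => 1 + (2*(δ*c)) * phiA ξ y ^ (-A) + ((δ*c)*(δ*c)) * phiA ξ y ^ (-A + -A)) := by
      filter_upwards [IsOpen.mem_nhds isOpen_compl_singleton hmem] with y hy
      exact hext2 y (by simpa using hy)
    have hlap : sLap d (fun ω' => u ω' ^ 2) ω
        = ((2*(δ*c)) * (-A) * ((-A) - 1) * phiA ξ (ω : E d) ^ ((-A) - 2)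
            + ((δ*c)*(δ*c)) * (-A + -A) * ((-A + -A) - 1) * phiA ξ (ω : E d) ^ ((-A + -A) - 2))
            * (4 * (‖ξ‖^2 - s^2))
          + ((2*(δ*c)) * (-A) * phiA ξ (ω : E d) ^ ((-A) - 1)
            + ((δ*c)*(δ*c)) * (-A + -A) * phiA ξ (ω : E d) ^ ((-A + -A) - 1))
            * (2 * (d:ℝ) * s) := by
      have h0 : sLap d (fun ω' => u ω' ^ 2) ω = ∑ i : Fin (d+1), iteratedFDeriv ℝ 2
          (ext d (fun ω' => u ω' ^ 2)) (ω : E d)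
          ![EuclideanSpace.single i 1, EuclideanSpace.single i 1] := rfl
      have h1 : ∀ i : Fin (d+1), iteratedFDeriv ℝ 2 (ext d (fun ω' => u ω' ^ 2)) (ω : E d)
          ![EuclideanSpace.single i 1, EuclideanSpace.single i 1]
        = iteratedFDeriv ℝ 2 (fun y => 1 + (2*(δ*c)) * phiA ξ y ^ (-A)
              + ((δ*c)*(δ*c)) * phiA ξ y ^ (-A + -A)) (ω : E d)
            ![EuclideanSpace.single i 1, EuclideanSpace.single i 1] := by
        intro i
        rw [iteratedFDeriv_two_apply, iteratedFDeriv_two_apply, (hev2.fderiv).fderiv_eq]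
      rw [h0, Finset.sum_congr rfl (fun i _ => h1 i),
        Finset.sum_congr rfl (fun i _ =>
          secondDeriv_eval hξ hω _ 1 (2*(δ*c)) (-A) ((δ*c)*(δ*c)) (-A + -A))]
      exact inner_sum_eval ξ (ω : E d) hω _ _
    have hev1 : ext d u =ᶠ[𝓝 ((ω : E d))]
        (fun y => 1 + (δ*c) * phiA ξ y ^ (-A) + 0 * phiA ξ y ^ (0:ℝ)) := by
      filter_upwards [IsOpen.mem_nhds isOpen_compl_singleton hmem] with y hy
      exact hext1 y (by simpa using hy)
    have hgradf : sGrad d u ω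
        = (((δ*c) * (-A) * phiA ξ (ω : E d) ^ ((-A) - 1)
              + 0 * 0 * phiA ξ (ω : E d) ^ ((0:ℝ) - 1)) * (-2)) • ξ
          + (((δ*c) * (-A) * phiA ξ (ω : E d) ^ ((-A) - 1)
              + 0 * 0 * phiA ξ (ω : E d) ^ ((0:ℝ) - 1)) * (2 * s)) • (ω : E d) := by
      have h0 : sGrad d u ω = gradient (ext d u) (ω : E d) := rfl
      rw [h0, hev1.gradient_eq, grad_eval hξ hω 1 (δ*c) (-A) 0 0]
    have hgrad : ‖sGrad d u ω‖ ^ 2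
        = (((δ*c) * (-A) * phiA ξ (ω : E d) ^ ((-A) - 1)
              + 0 * 0 * phiA ξ (ω : E d) ^ ((0:ℝ) - 1)) * (-2)) ^ 2 * ‖ξ‖ ^ 2
          + 2 * (((δ*c) * (-A) * phiA ξ (ω : E d) ^ ((-A) - 1)
              + 0 * 0 * phiA ξ (ω : E d) ^ ((0:ℝ) - 1)) * (-2))
            * (((δ*c) * (-A) * phiA ξ (ω : E d) ^ ((-A) - 1)
              + 0 * 0 * phiA ξ (ω : E d) ^ ((0:ℝ) - 1)) * (2 * s)) * s
          + (((δ*c) * (-A) * phiA ξ (ω : E d) ^ ((-A) - 1)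
              + 0 * 0 * phiA ξ (ω : E d) ^ ((0:ℝ) - 1)) * (2 * s)) ^ 2 := by
      rw [hgradf, norm_comb hω]
    have hcp : confPush d (mobOf d ξ hξ) (fun _ => 1) ω = c * X := by
      rw [confPush_eq hd ξ hξ ω, ← hA, ← hc, ← hX]
    have huval : u ω = 1 + δ * (c * X) := by
      show 1 + δ * confPush d (mobOf d ξ hξ) (fun _ => 1) ω = 1 + δ * (c * X)
      rw [hcp]
    have hbpos : 0 < (1 - ‖ξ‖^2) / phiA ξ (ω : E d) := div_pos (by linarith) hφpos
    have hcx : c * X = ((1 - ‖ξ‖^2) / phiA ξ (ω : E d)) ^ A := by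
      rw [Real.div_rpow (by linarith) hφpos.le, hc, hX, Real.rpow_neg hφpos.le, div_eq_mul_inv]
    have hb2 : ((1 - ‖ξ‖^2) / phiA ξ (ω : E d)) ^ (2:ℝ)
        = ((1 - ‖ξ‖^2) / phiA ξ (ω : E d)) * ((1 - ‖ξ‖^2) / phiA ξ (ω : E d)) := by
      rw [show (2:ℝ) = ((2:ℕ):ℝ) by norm_num, Real.rpow_natCast, pow_two]
    have hexp : A * (2 * (d:ℝ) / ((d:ℝ) - 4)) = A + (A + 2) := by
      rw [hA]; field_simp; ring
    have hpowval : (c * X) ^ (2 * (d:ℝ) / ((d:ℝ) - 4))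
        = (c * X) * ((c * X) * (((1 - ‖ξ‖^2) / phiA ξ (ω : E d))
            * ((1 - ‖ξ‖^2) / phiA ξ (ω : E d)))) := by
      rw [hcx, ← Real.rpow_mul hbpos.le, hexp, Real.rpow_add hbpos, Real.rpow_add hbpos, hb2]
    have hnorm2 : ‖(ω : E d) - ξ‖ ^ 2 = 1 - 2 * s + ‖ξ‖ ^ 2 := by
      have hco : ⟪(ω : E d), ξ⟫ = s := by rw [hsdef]; exact real_inner_comm _ _
      rw [@norm_sub_sq_real _ _ _ (ω : E d) ξ, hω, hco]
      norm_num
    have hnorm4 : ‖(ω : E d) - ξ‖ ^ 4 = (1 - 2 * s + ‖ξ‖ ^ 2) ^ 2 := by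
      rw [show ‖(ω : E d) - ξ‖ ^ 4 = (‖(ω : E d) - ξ‖ ^ 2) ^ 2 by ring, hnorm2]
    have hr1 : phiA ξ (ω : E d) ^ ((-A) - 1) = X * (phiA ξ (ω : E d))⁻¹ := by
      rw [show (-A) - 1 = (-A) + (-1) by ring, Real.rpow_add hφpos, Real.rpow_neg_one, ← hX]
    have hr2 : phiA ξ (ω : E d) ^ ((-A) - 2)
        = X * ((phiA ξ (ω : E d))⁻¹ * (phiA ξ (ω : E d))⁻¹) := by
      rw [show (-A) - 2 = (-A) + (-1 + -1) by ring, Real.rpow_add hφpos,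
        Real.rpow_add hφpos, Real.rpow_neg_one, ← hX]
    have hr3 : phiA ξ (ω : E d) ^ ((-A + -A) - 1) = X * (X * (phiA ξ (ω : E d))⁻¹) := by
      rw [show (-A + -A) - 1 = (-A) + ((-A) + (-1)) by ring, Real.rpow_add hφpos,
        Real.rpow_add hφpos, Real.rpow_neg_one, ← hX]
    have hr4 : phiA ξ (ω : E d) ^ ((-A + -A) - 2)
        = X * (X * ((phiA ξ (ω : E d))⁻¹ * (phiA ξ (ω : E d))⁻¹)) := by
      rw [show (-A + -A) - 2 = (-A) + ((-A) + (-1 + -1)) by ring, Real.rpow_add hφpos,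
        Real.rpow_add hφpos, Real.rpow_add hφpos, Real.rpow_neg_one, ← hX]
    have hφne : (1 : ℝ) - 2 * s + ‖ξ‖ ^ 2 ≠ 0 := by rw [← hφval]; exact hφpos.ne'
    have hsig : sigma1 d u ω
        = -(((d:ℝ) - 4)/8) * sLap d (fun ω' => u ω' ^ 2) ω - ‖sGrad d u ω‖ ^ 2
          + ((d:ℝ)/2) * A ^ 2 * u ω ^ 2 := rfl
    rw [hsig, hlap, hgrad, huval, hcp, hpowval, hnorm4, hr1, hr2, hr3, hr4, hφval, ← hA]
    field_simp
    ring
  refine ⟨?_, fun ω => ⟨keyEq ω, hQ ω⟩⟩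
  intro ω
  rw [keyEq ω]
  have hω0 : (ω : E d) ≠ 0 := sph_ne_zero ω
  have hφpos : 0 < phiA ξ (ω : E d) := phiA_pos hξ hω0
  have hcp : 0 < confPush d (mobOf d ξ hξ) (fun _ => 1) ω := by
    rw [confPush_eq hd ξ hξ ω]
    exact mul_pos (Real.rpow_pos_of_pos (by linarith) _) (Real.rpow_pos_of_pos hφpos _)
  have hT : 0 < (confPush d (mobOf d ξ hξ) (fun _ => 1) ω) ^ (2 * (d:ℝ) / ((d:ℝ) - 4)) :=
    Real.rpow_pos_of_pos hcp _
  have hne : (ω : E d) ≠ ξ := by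
    intro h
    rw [← h, sph_norm ω] at hξ
    exact lt_irrefl 1 hξ
  have hn4 : 0 < ‖(ω : E d) - ξ‖ ^ 4 := by
    have h0 : (ω : E d) - ξ ≠ 0 := sub_ne_zero.mpr hne
    have h1 : 0 < ‖(ω : E d) - ξ‖ := norm_pos_iff.mpr h0
    positivity
  have hQω := hQ ω
  have hbig : 0 < 1 + δ ^ 2 * (confPush d (mobOf d ξ hξ) (fun _ => 1) ω) ^ (2 * (d:ℝ) / ((d:ℝ) - 4))
      + δ * confPush d (mobOf d ξ hξ) (fun _ => 1) ω *
        (2 * (-(‖ξ‖ ^ 2) + ⟪ξ, (ω : E d)⟫ ^ 2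
            + 2 * ⟪ξ, (ω : E d)⟫ * (1 - 2 * ⟪ξ, (ω : E d)⟫ + ‖ξ‖ ^ 2)
            + (1 - 2 * ⟪ξ, (ω : E d)⟫ + ‖ξ‖ ^ 2) ^ 2)) / ‖(ω : E d) - ξ‖ ^ 4 := by
    have t1 : 0 < δ ^ 2 * (confPush d (mobOf d ξ hξ) (fun _ => 1) ω) ^ (2 * (d:ℝ) / ((d:ℝ) - 4)) :=
      mul_pos (pow_pos hδ 2) hT
    have t2 : 0 < δ * confPush d (mobOf d ξ hξ) (fun _ => 1) ω *
        (2 * (-(‖ξ‖ ^ 2) + ⟪ξ, (ω : E d)⟫ ^ 2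
            + 2 * ⟪ξ, (ω : E d)⟫ * (1 - 2 * ⟪ξ, (ω : E d)⟫ + ‖ξ‖ ^ 2)
            + (1 - 2 * ⟪ξ, (ω : E d)⟫ + ‖ξ‖ ^ 2) ^ 2)) / ‖(ω : E d) - ξ‖ ^ 4 :=
      div_pos (mul_pos (mul_pos hδ hcp) hQω) hn4
    linarith
  have hcoef : 0 < ((d:ℝ)/2) * A ^ 2 := by positivity
  calc (0:ℝ) < ((d:ℝ)/2) * A ^ 2 * (1 + δ ^ 2 * (confPush d (mobOf d ξ hξ) (fun _ => 1) ω) ^ (2 * (d:ℝ) / ((d:ℝ) - 4))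
      + δ * confPush d (mobOf d ξ hξ) (fun _ => 1) ω *
        (2 * (-(‖ξ‖ ^ 2) + ⟪ξ, (ω : E d)⟫ ^ 2
            + 2 * ⟪ξ, (ω : E d)⟫ * (1 - 2 * ⟪ξ, (ω : E d)⟫ + ‖ξ‖ ^ 2)
            + (1 - 2 * ⟪ξ, (ω : E d)⟫ + ‖ξ‖ ^ 2) ^ 2)) / ‖(ω : E d) - ξ‖ ^ 4) :=
        mul_pos hcoef hbig
    _ = _ := by rw [hA]

end S2Stab
end
end
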